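/- Let D ⊆ ℂ be a domain with #(ℂ \ D) < 2n for some n ≥ 2. Then S_n(D) contains a non-constant holomorphic image of ℂ, hence S_n(D) is not Kobayashi hyperbolic. -/

import Mathlib

/-- The symmetrization map `π_n : ℂ^n → ℂ^n`, whose `j`-th coordinate is the
`(j+1)`-st elementary symmetric polynomial of the entries. -/
noncomputable def symPoly (n : ℕ) (lam : Fin n → ℂ) : Fin n → ℂ :=
  fun j => ∑ t ∈ Finset.powersetCard ((j : ℕ) + 1) Finset.univ, ∏ i ∈ t, lam i

/-- The `n`-fold symmetric product `S_n(D) = π_n(D^n)` of a planar set `D`. -/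
noncomputable def symProd (n : ℕ) (D : Set ℂ) : Set (Fin n → ℂ) :=
  symPoly n '' {lam | ∀ i, lam i ∈ D}


open scoped ENNReal

/-- The Poincaré distance on the unit disc `𝔻 ⊆ ℂ`. -/
noncomputable def poincareDist (a b : ℂ) : ℝ :=
  let ρ := ‖(a - b) / (1 - (starRingEnd ℂ) a * b)‖
  (1 / 2) * Real.log ((1 + ρ) / (1 - ρ))

/-- The Lempert function of `Ω ⊆ E`, defined via analytic discs in `Ω`. -/
noncomputable def lempert (E : Type*) [NormedAddCommGroup E] [NormedSpace ℂ E]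
    (Ω : Set E) (w z : E) : ℝ≥0∞ :=
  ⨅ d : {d : (ℂ → E) × ℂ //
      DifferentiableOn ℂ d.1 (Metric.ball 0 1) ∧
      Set.MapsTo d.1 (Metric.ball 0 1) Ω ∧
      d.1 0 = w ∧ d.2 ∈ Metric.ball (0 : ℂ) 1 ∧ d.1 d.2 = z},
    ENNReal.ofReal (poincareDist 0 d.1.2)

/-- The Kobayashi pseudodistance of `Ω ⊆ E`: the largest pseudodistance
dominated by the Lempert function, obtained by chaining analytic discs. -/
noncomputable def kobayashi (E : Type*) [NormedAddCommGroup E] [NormedSpace ℂ E]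
    (Ω : Set E) (w z : E) : ℝ≥0∞ :=
  ⨅ c : {c : Σ m : ℕ, Fin (m + 1) → E //
      c.2 0 = w ∧ c.2 (Fin.last c.1) = z ∧ ∀ i, c.2 i ∈ Ω},
    ∑ i : Fin c.1.1, lempert E Ω (c.1.2 i.castSucc) (c.1.2 i.succ)


/-! Write `T = ℂ \ D` as a disjoint union of at most `n` points `T₁` and fewer than `n` points `T₂`,
and take `A` monic of degree `n` vanishing on `T₁` but nowhere on `T₂`, and `B` of degree `< n`
with zero set `T₂`. For every `z` the monic degree-`n` polynomial `A + e^z B` has no root in `T`,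
so by Vieta its signed coefficients are a point of `S_n(D)`; this gives an entire curve in `S_n(D)`,
non-constant because `B ≠ 0`. Along an entire curve `f` the Kobayashi pseudodistance vanishes:
the disc `w ↦ f (w z / r)` joins `f 0` to `f z` at Poincaré distance `O(r)`. -/

open Polynomial

theorem Multiset.exists_fin_map_eq {α : Type*} (s : Multiset α) :
    ∃ lam : Fin (Multiset.card s) → α, Finset.univ.val.map lam = s := by
  refine ⟨fun i => s.toList.get (i.cast s.length_toList.symm), ?_⟩
  rw [Fin.univ_val_map]
  conv_rhs => rw [← s.coe_toList]
  congr 1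
  exact List.ext_get (by simp) (by simp)

/-- By Vieta, `signedCoeffs n (∏ i, (X - C (lam i))) = symPoly n lam`. -/
noncomputable def signedCoeffs (n : ℕ) (P : ℂ[X]) : Fin n → ℂ :=
  fun j => (-1) ^ ((j : ℕ) + 1) * P.coeff (n - 1 - j)

theorem signedCoeffs_mem_symProd {n : ℕ} {D : Set ℂ} {P : ℂ[X]} (hP : P.Monic)
    (hdeg : P.natDegree = n) (hroots : ∀ r ∈ P.roots, r ∈ D) :
    signedCoeffs n P ∈ symProd n D := by
  have hsplit : P.Splits := IsAlgClosed.splits P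
  have hcard : Multiset.card P.roots = n := (splits_iff_card_roots.mp hsplit).trans hdeg
  obtain ⟨lam, hlam⟩ := P.roots.exists_fin_map_eq
  subst hcard
  refine ⟨lam, fun i => hroots _ (hlam ▸ Multiset.mem_map_of_mem _ (Finset.mem_univ i)),
    funext fun j => ?_⟩
  have hj := j.isLt
  have hvieta := coeff_eq_esymm_roots_of_splits hsplit (k := P.roots.card - 1 - j) (by omega)
  rw [hdeg, hP.leadingCoeff, one_mul, show P.roots.card - (P.roots.card - 1 - j) = j + 1 by omega]
    at hvieta
  rw [symPoly, signedCoeffs, hvieta, ← mul_assoc, ← pow_add, Even.neg_one_pow ⟨_, rfl⟩, one_mul,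
    ← Finset.esymm_map_val, hlam]

noncomputable def pencilCurve (n : ℕ) (A B : ℂ[X]) (z : ℂ) : Fin n → ℂ :=
  signedCoeffs n (A + C (Complex.exp z) * B)

section pencilCurve

variable {n : ℕ} {A B : ℂ[X]}

theorem pencilCurve_apply (z : ℂ) (j : Fin n) :
    pencilCurve n A B z j =
      (-1) ^ ((j : ℕ) + 1) * (A.coeff (n - 1 - j) + Complex.exp z * B.coeff (n - 1 - j)) := by
  simp only [pencilCurve, signedCoeffs, coeff_add, coeff_C_mul]

theorem differentiable_pencilCurve : Differentiable ℂ (pencilCurve n A B) := by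
  rw [differentiable_pi]
  intro j
  simp only [pencilCurve_apply]
  fun_prop

theorem pencilCurve_zero_ne_pi_mul_I (hB : B ≠ 0) (hBdeg : B.natDegree < n) :
    pencilCurve n A B 0 ≠ pencilCurve n A B (Real.pi * Complex.I) := by
  intro h
  have hj := congrFun h ⟨n - 1 - B.natDegree, by omega⟩
  rw [pencilCurve_apply, pencilCurve_apply, Complex.exp_zero, Complex.exp_pi_mul_I,
    show n - 1 - (n - 1 - B.natDegree) = B.natDegree by omega, coeff_natDegree] at hj
  have hcancel := mul_left_cancel₀ (pow_ne_zero _ (neg_ne_zero.mpr one_ne_zero)) hj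
  exact leadingCoeff_ne_zero.mpr hB (by linear_combination hcancel / 2)

theorem range_pencilCurve_subset_symProd {D : Set ℂ} (hA : A.Monic) (hAdeg : A.natDegree = n)
    (hBdeg : B.natDegree < n) (hD : ∀ t ∉ D, ∀ w ≠ 0, A.eval t + w * B.eval t ≠ 0) :
    Set.range (pencilCurve n A B) ⊆ symProd n D := by
  rintro _ ⟨z, rfl⟩
  have hlt : (C (Complex.exp z) * B).degree < A.degree := by
    rw [degree_eq_natDegree hA.ne_zero, hAdeg, degree_C_mul (Complex.exp_ne_zero z)]
    exact degree_le_natDegree.trans_lt (by exact_mod_cast hBdeg)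
  refine signedCoeffs_mem_symProd (hA.add_of_left hlt) ?_ fun r hr => ?_
  · rw [natDegree_add_eq_left_of_degree_lt hlt, hAdeg]
  · by_contra hrD
    refine hD r hrD _ (Complex.exp_ne_zero z) ?_
    simpa using (mem_roots'.mp hr).2

end pencilCurve

theorem Polynomial.eval_multiset_prod_X_sub_C_eq_zero_iff {R : Type*} [CommRing R] [IsDomain R]
    {s : Multiset R} {t : R} : (s.map fun a => X - C a).prod.eval t = 0 ↔ t ∈ s := by
  rw [← IsRoot.def,
    ← mem_roots (monic_multiset_prod_of_monic _ _ fun a _ => monic_X_sub_C a).ne_zero,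
    roots_multiset_prod_X_sub_C]

theorem Finset.exists_multiset_split_of_card_lt_two_mul {α : Type*} [Infinite α]
    {T : Finset α} {n : ℕ} (hT : T.card < 2 * n) :
    ∃ sA sB : Multiset α, Multiset.card sA = n ∧ Multiset.card sB < n ∧
      ∀ t ∈ T, Xor (t ∈ sA) (t ∈ sB) := by
  classical
  obtain ⟨T₁, hT₁T, hT₁card⟩ := Finset.exists_subset_card_eq (min_le_left T.card n)
  obtain ⟨c, hc⟩ := Infinite.exists_notMem_finset T
  refine ⟨T₁.val + Multiset.replicate (n - T₁.card) c, (T \ T₁).val, ?_, ?_, fun t ht => ?_⟩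
  · simp only [Multiset.card_add, Finset.card_val, Multiset.card_replicate]
    omega
  · rw [Finset.card_val, Finset.card_sdiff_of_subset hT₁T]
    omega
  · have htc : t ≠ c := ne_of_mem_of_not_mem ht hc
    simp only [xor_def, Multiset.mem_add, Finset.mem_val, Finset.mem_sdiff, Multiset.mem_replicate]
    tauto

theorem exists_entire_curve_in_symProd {n : ℕ} {D : Set ℂ} (hcard : Dᶜ.encard < 2 * n) :
    ∃ f : ℂ → Fin n → ℂ, Differentiable ℂ f ∧ (¬ ∃ c, f = fun _ => c) ∧
      Set.range f ⊆ symProd n D := by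
  have hfin : Dᶜ.Finite := Set.encard_lt_top_iff.mp (hcard.trans_le le_top)
  rw [hfin.encard_eq_coe_toFinset_card] at hcard
  obtain ⟨sA, sB, hsA, hsB, hsplit⟩ :=
    Finset.exists_multiset_split_of_card_lt_two_mul (by exact_mod_cast hcard)
  set A : ℂ[X] := (sA.map fun a => X - C a).prod
  set B : ℂ[X] := (sB.map fun a => X - C a).prod
  have hA : A.Monic := monic_multiset_prod_of_monic _ _ fun a _ => monic_X_sub_C a
  have hB : B.Monic := monic_multiset_prod_of_monic _ _ fun a _ => monic_X_sub_C a
  have hBdeg : B.natDegree < n := by rwa [natDegree_multiset_prod_X_sub_C_eq_card]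
  refine ⟨pencilCurve n A B, differentiable_pencilCurve,
    fun ⟨c, hc⟩ => pencilCurve_zero_ne_pi_mul_I hB.ne_zero hBdeg (by rw [hc]),
    range_pencilCurve_subset_symProd hA (by rw [natDegree_multiset_prod_X_sub_C_eq_card, hsA])
      hBdeg fun t ht w hw => ?_⟩
  rcases hsplit t (by simpa using ht) with ⟨htA, htB⟩ | ⟨htB, htA⟩
  · rw [eval_multiset_prod_X_sub_C_eq_zero_iff.mpr htA, zero_add]
    exact mul_ne_zero hw (mt eval_multiset_prod_X_sub_C_eq_zero_iff.mp htB)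
  · rw [eval_multiset_prod_X_sub_C_eq_zero_iff.mpr htB, mul_zero, add_zero]
    exact mt eval_multiset_prod_X_sub_C_eq_zero_iff.mp htA

section Kobayashi

variable {E : Type*} [NormedAddCommGroup E] [NormedSpace ℂ E] {Ω : Set E}

theorem kobayashi_le_lempert {w z : E} (hw : w ∈ Ω) (hz : z ∈ Ω) :
    kobayashi E Ω w z ≤ lempert E Ω w z := by
  refine (iInf_le _ ⟨⟨1, ![w, z]⟩, rfl, rfl, fun i => by fin_cases i <;> assumption⟩).trans ?_
  simp

theorem poincareDist_zero_ofReal_le {r : ℝ} (hr₀ : 0 ≤ r) (hr : r ≤ 1 / 2) :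
    poincareDist 0 r ≤ 2 * r := by
  have hnorm : ‖(0 - (r : ℂ)) / (1 - starRingEnd ℂ 0 * r)‖ = r := by
    simp [Complex.norm_real, abs_of_nonneg hr₀]
  have hpos : 0 < 1 - r := by linarith
  calc poincareDist 0 r = 1 / 2 * Real.log ((1 + r) / (1 - r)) := by rw [poincareDist, hnorm]
    _ ≤ 1 / 2 * ((1 + r) / (1 - r) - 1) := by
        gcongr
        exact Real.log_le_sub_one_of_pos (by positivity)
    _ = r / (1 - r) := by field_simp; ring
    _ ≤ 2 * r := by rw [div_le_iff₀ hpos]; nlinarith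

theorem lempert_le_of_entire {f : ℂ → E} (hf : Differentiable ℂ f) (hrange : Set.range f ⊆ Ω)
    (z : ℂ) {r : ℝ} (hr₀ : 0 < r) (hr₁ : r < 1) :
    lempert E Ω (f 0) (f z) ≤ ENNReal.ofReal (poincareDist 0 r) := by
  have hr : (r : ℂ) ≠ 0 := by exact_mod_cast hr₀.ne'
  refine iInf_le_of_le ⟨(fun w => f (w * (z / r)), r), ?_, fun w _ => hrange ⟨_, rfl⟩, ?_, ?_, ?_⟩
    le_rfl
  · exact (hf.comp (differentiable_id.mul_const _)).differentiableOn
  · simp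
  · simpa [Complex.norm_real, abs_of_pos hr₀] using hr₁
  · simp only
    rw [mul_div_cancel₀ _ hr]

theorem lempert_eq_zero_of_entire {f : ℂ → E} (hf : Differentiable ℂ f)
    (hrange : Set.range f ⊆ Ω) (z : ℂ) : lempert E Ω (f 0) (f z) = 0 := by
  refine le_antisymm (ENNReal.le_of_forall_pos_le_add fun ε hε _ => ?_) zero_le
  set r : ℝ := min (ε / 2) (1 / 2)
  have hr₀ : 0 < r := lt_min (by positivity) one_half_pos
  calc lempert E Ω (f 0) (f z) ≤ ENNReal.ofReal (poincareDist 0 r) :=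
        lempert_le_of_entire hf hrange z hr₀ (by linarith [min_le_right (ε / 2 : ℝ) (1 / 2)])
    _ ≤ ENNReal.ofReal (2 * r) :=
        ENNReal.ofReal_le_ofReal (poincareDist_zero_ofReal_le hr₀.le (min_le_right _ _))
    _ ≤ 0 + ε := by
        rw [zero_add, ← ENNReal.ofReal_coe_nnreal]
        exact ENNReal.ofReal_le_ofReal (by linarith [min_le_left (ε / 2 : ℝ) (1 / 2)])

theorem kobayashi_eq_zero_of_entire {f : ℂ → E} (hf : Differentiable ℂ f)
    (hrange : Set.range f ⊆ Ω) (z : ℂ) : kobayashi E Ω (f 0) (f z) = 0 :=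
  le_antisymm ((kobayashi_le_lempert (hrange ⟨0, rfl⟩) (hrange ⟨z, rfl⟩)).trans
    (lempert_eq_zero_of_entire hf hrange z).le) zero_le

end Kobayashi

theorem symProd_not_kobayashi_hyperbolic_general (n : ℕ) (D : Set ℂ)
    (hcard : Set.encard Dᶜ < 2 * n) :
    (∃ f : ℂ → (Fin n → ℂ), Differentiable ℂ f ∧
      (¬ ∃ c, f = fun _ => c) ∧ Set.range f ⊆ symProd n D) ∧
    ¬ (∀ p ∈ symProd n D, ∀ q ∈ symProd n D, p ≠ q →
        0 < kobayashi (Fin n → ℂ) (symProd n D) p q) := by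
  obtain ⟨f, hf, hnonconst, hrange⟩ := exists_entire_curve_in_symProd hcard
  refine ⟨⟨f, hf, hnonconst, hrange⟩, fun hhyperbolic => ?_⟩
  obtain ⟨z, hz⟩ : ∃ z, f z ≠ f 0 := by
    by_contra! h
    exact hnonconst ⟨f 0, funext h⟩
  exact (hhyperbolic _ (hrange ⟨0, rfl⟩) _ (hrange ⟨z, rfl⟩) hz.symm).ne'
    (kobayashi_eq_zero_of_entire hf hrange z)

/-- If `D ⊆ ℂ` is a domain whose complement has fewer than `2n` points
(`n ≥ 2`), then `S_n(D)` contains a non-constant holomorphic image of `ℂ`,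
hence `S_n(D)` is not Kobayashi hyperbolic. -/
theorem symProd_not_kobayashi_hyperbolic (n : ℕ) (hn : 2 ≤ n) (D : Set ℂ)
    (hDopen : IsOpen D) (hDconn : IsConnected D)
    (hcard : Set.encard Dᶜ < 2 * n) :
    (∃ f : ℂ → (Fin n → ℂ), Differentiable ℂ f ∧
      (¬ ∃ c, f = fun _ => c) ∧ Set.range f ⊆ symProd n D) ∧
    ¬ (∀ p ∈ symProd n D, ∀ q ∈ symProd n D, p ≠ q →
        0 < kobayashi (Fin n → ℂ) (symProd n D) p q) :=
  symProd_not_kobayashi_hyperbolic_general n D hcard
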